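/- (Pinsker–Kelley) A Boolean σ-algebra B carries a measure if and only if B is weakly distributive and carries a strictly positive finitely additive measure. -/

import Mathlib

/-!
A measure is continuous from below, so each countable maximal antichain `W n` has a finite part
`E n` with `m (⋁ E n)ᶜ < 2⁻ⁿ`, and by Borel–Cantelli `⋁ E n → 1`.

Conversely, for a strictly positive finitely additive `m` let `ν a` be the infimum of
`∑ m (c n)` over countable covers `c` of `a`. It is σ-subadditive, and restricting covers to
the two halves of a disjoint union shows it is finitely additive, so it is σ-additive and
`ν / ν ⊤` is a measure as soon as `ν` is strictly positive. If `ν a = 0` with `a ≠ 0`, take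
covers `c k` of `a` of mass `< 2⁻ᵏ`; disjointifying `aᶜ ⊔ c k j` gives countable maximal
antichains, and weak distributivity yields `x ≠ 0` below `a` and, for all large `k`, below
finitely many of the `c k j`; then `m x < 2⁻ᵏ` for all large `k`, contradicting `m x > 0`.
-/

universe u

/-- A Boolean σ-algebra: a Boolean algebra in which every countable subset
(equivalently, every `ℕ`-indexed sequence) has a supremum. -/
class BooleanSigmaAlgebra (α : Type u) extends BooleanAlgebra α where
  seqSup : (ℕ → α) → α
  le_seqSup : ∀ (f : ℕ → α) (n : ℕ), f n ≤ seqSup f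
  seqSup_le : ∀ (f : ℕ → α) (b : α), (∀ n, f n ≤ b) → seqSup f ≤ b

namespace BooleanSigmaAlgebra

variable {α : Type u} [BooleanSigmaAlgebra α]

/-- Countable infimum, derived from countable suprema via complements. -/
def seqInf (f : ℕ → α) : α := (seqSup fun n => (f n)ᶜ)ᶜ

/-- `limsup_n a_n = ⋀_n ⋁_{k ≥ n} a_k`. -/
def blimsup (f : ℕ → α) : α := seqInf fun n => seqSup fun k => f (n + k)

/-- `liminf_n a_n = ⋁_n ⋀_{k ≥ n} a_k`. -/
def bliminf (f : ℕ → α) : α := seqSup fun n => seqInf fun k => f (n + k)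

/-- The sequence `a_n` converges to `0`, i.e. `limsup_n a_n = 0` (which is
equivalent to `lim_n a_n = 0`). -/
def TendstoBot (f : ℕ → α) : Prop := blimsup f = ⊥

/-- The sequence `a_n` converges to `1`, i.e. `liminf_n a_n = 1` (which is
equivalent to `lim_n a_n = 1`). -/
def TendstoTop (f : ℕ → α) : Prop := bliminf f = ⊤

/-- An antichain: a set of nonzero pairwise disjoint elements. -/
def IsAC (A : Set α) : Prop := ⊥ ∉ A ∧ A.Pairwise fun a b => a ⊓ b = ⊥

/-- A maximal antichain: an antichain such that every nonzero element meets
some member of it. -/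
def IsMaxAC (W : Set α) : Prop := IsAC W ∧ ∀ b : α, b ≠ ⊥ → ∃ w ∈ W, w ⊓ b ≠ ⊥

/-- A countable maximal antichain. -/
def IsCMA (W : Set α) : Prop := W.Countable ∧ IsMaxAC W

/-- `B` is weakly distributive: every sequence `{W_n}` of countable maximal
antichains admits finite subsets `E_n ⊆ W_n` with `lim_n ⋁E_n = 1`. -/
def WeaklyDistributive (α : Type u) [BooleanSigmaAlgebra α] : Prop :=
  ∀ W : ℕ → Set α, (∀ n, IsCMA (W n)) →
    ∃ E : ℕ → Finset α, (∀ n, ↑(E n) ⊆ W n) ∧ TendstoTop fun n => (E n).sup id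

/-- `B` is uniformly weakly distributive: there are functions `F_n` assigning
to each countable maximal antichain `W` a finite subset `F_n(W) ⊆ W` such that
for every sequence `{W_n}` of countable maximal antichains,
`lim_n ⋁F_n(W_n) = 1`. -/
def UniformlyWeaklyDistributive (α : Type u) [BooleanSigmaAlgebra α] : Prop :=
  ∃ F : ℕ → Set α → Finset α,
    (∀ (n : ℕ) (W : Set α), IsCMA W → ↑(F n W) ⊆ W) ∧
    ∀ W : ℕ → Set α, (∀ n, IsCMA (W n)) → TendstoTop fun n => (F n (W n)).sup id

/-- `B` is uniformly concentrated: there is a function `F` assigning to each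
finite antichain `A` an element `F(A) ∈ A` such that for every sequence `{A_n}`
of finite antichains with `|A_n| ≥ 2^n`, `lim_n F(A_n) = 0`. -/
def UniformlyConcentrated (α : Type u) [BooleanSigmaAlgebra α] : Prop :=
  ∃ F : Finset α → α,
    (∀ A : Finset α, A.Nonempty → IsAC (↑A : Set α) → F A ∈ A) ∧
    ∀ A : ℕ → Finset α, (∀ n, IsAC (↑(A n) : Set α) ∧ 2 ^ n ≤ (A n).card) →
      TendstoBot fun n => F (A n)

/-- `B` is concentrated: for every sequence `{A_n}` of finite antichains with
`|A_n| ≥ 2^n` there are `a_n ∈ A_n` with `lim_n a_n = 0`. -/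
def Concentrated (α : Type u) [BooleanSigmaAlgebra α] : Prop :=
  ∀ A : ℕ → Finset α, (∀ n, IsAC (↑(A n) : Set α) ∧ 2 ^ n ≤ (A n).card) →
    ∃ a : ℕ → α, (∀ n, a n ∈ A n) ∧ TendstoBot a

/-- A strictly positive finitely additive (probability) measure on `B`. -/
structure IsFinAddMeasure (m : α → ℝ) : Prop where
  map_bot : m ⊥ = 0
  pos : ∀ a : α, a ≠ ⊥ → 0 < m a
  map_top : m ⊤ = 1
  mono : ∀ a b : α, a ≤ b → m a ≤ m b
  add : ∀ a b : α, a ⊓ b = ⊥ → m (a ⊔ b) = m a + m b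

/-- A (strictly positive, σ-additive, probability) measure on `B`. -/
structure IsMeasure (m : α → ℝ) extends IsFinAddMeasure m : Prop where
  sigma_add : ∀ f : ℕ → α, (∀ i j : ℕ, i ≠ j → f i ⊓ f j = ⊥) →
    HasSum (fun n => m (f n)) (m (seqSup f))

/-- A measure algebra: a Boolean σ-algebra carrying a measure. -/
def IsMeasureAlgebra (α : Type u) [BooleanSigmaAlgebra α] : Prop :=
  ∃ m : α → ℝ, IsMeasure m

/-- A fragmentation of `B`: an increasing sequence of upward closed subsets of
`B ∖ {0}` whose union is `B ∖ {0}`. -/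
structure IsFragmentation (C : ℕ → Set α) : Prop where
  mono : ∀ n, C n ⊆ C (n + 1)
  not_bot : ∀ n, ⊥ ∉ C n
  upward : ∀ (n : ℕ) (a b : α), a ∈ C n → a ≤ b → b ∈ C n
  covers : ∀ a : α, a ≠ ⊥ → ∃ n, a ∈ C n

/-- A fragmentation is tight if `a_n ∉ C_n` for all `n` implies `lim_n a_n = 0`. -/
def Tight (C : ℕ → Set α) : Prop :=
  ∀ a : ℕ → α, (∀ n, a n ∉ C n) → TendstoBot a

/-- A fragmentation is σ-bounded cc if for every `n` there is a bound `K_n` on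
the size of antichains contained in `C_n`. -/
def SigmaBoundedCC (C : ℕ → Set α) : Prop :=
  ∀ n : ℕ, ∃ K : ℕ, ∀ A : Set α, A ⊆ C n → IsAC A → A.Finite ∧ A.ncard ≤ K

/-- A fragmentation is σ-finite cc if every antichain contained in some `C_n`
is finite. -/
def SigmaFiniteCC (C : ℕ → Set α) : Prop :=
  ∀ n : ℕ, ∀ A : Set α, A ⊆ C n → IsAC A → A.Finite

/-- A fragmentation is `G_δ` if for every `n` no sequence of elements of `C_n`
converges to `0`. -/
def GDelta (C : ℕ → Set α) : Prop :=
  ∀ (n : ℕ) (a : ℕ → α), (∀ k, a k ∈ C n) → ¬ TendstoBot a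

/-- A fragmentation is graded if `a ⊔ b ∈ C_n` implies `a ∈ C_{n+1}` or
`b ∈ C_{n+1}`. -/
def Graded (C : ℕ → Set α) : Prop :=
  ∀ (n : ℕ) (a b : α), a ⊔ b ∈ C n → a ∈ C (n + 1) ∨ b ∈ C (n + 1)


open Function Filter Finset
open scoped ENNReal Topology

theorem seqInf_le (f : ℕ → α) (n : ℕ) : seqInf f ≤ f n :=
  compl_le_iff_compl_le.1 (le_seqSup (fun n => (f n)ᶜ) n)

theorem compl_seqInf (f : ℕ → α) : (seqInf f)ᶜ = seqSup fun n => (f n)ᶜ :=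
  compl_compl _

theorem seqSup_mono {f g : ℕ → α} (h : ∀ n, f n ≤ g n) : seqSup f ≤ seqSup g :=
  seqSup_le _ _ fun n => (h n).trans (le_seqSup g n)

theorem inf_seqSup (a : α) (f : ℕ → α) : a ⊓ seqSup f = seqSup fun n => a ⊓ f n := by
  refine le_antisymm ?_ (seqSup_le _ _ fun n => inf_le_inf_left a (le_seqSup f n))
  suffices seqSup f ≤ aᶜ ⊔ seqSup fun n => a ⊓ f n by
    calc a ⊓ seqSup f ≤ a ⊓ (aᶜ ⊔ seqSup fun n => a ⊓ f n) := inf_le_inf_left a this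
      _ ≤ seqSup fun n => a ⊓ f n := by
        rw [inf_sup_left, inf_compl_eq_bot, bot_sup_eq]
        exact inf_le_right
  refine seqSup_le _ _ fun n => ?_
  calc f n ≤ aᶜ ⊔ a ⊓ f n := by
        rw [sup_inf_left, compl_sup_eq_top, top_inf_eq]
        exact le_sup_right
    _ ≤ _ := sup_le_sup_left (le_seqSup (fun n => a ⊓ f n) n) _

theorem eq_bot_of_forall_inf_eq_bot {f : ℕ → α} (hf : seqSup f = ⊤) {a : α}
    (h : ∀ n, a ⊓ f n = ⊥) : a = ⊥ := by
  rw [← inf_top_eq a, ← hf, inf_seqSup]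
  exact le_bot_iff.1 (seqSup_le _ _ fun n => (h n).le)

theorem sup_range_disjointed (f : ℕ → α) (N : ℕ) :
    (range N).sup (disjointed f) = (range N).sup f := by
  cases N with
  | zero => simp
  | succ N =>
    rw [← partialSups_eq_sup_range, ← partialSups_eq_sup_range, partialSups_disjointed]

theorem seqSup_disjointed (f : ℕ → α) : seqSup (disjointed f) = seqSup f := by
  refine le_antisymm (seqSup_mono (disjointed_le f)) (seqSup_le _ _ fun n => ?_)
  calc f n ≤ (range (n + 1)).sup f := Finset.le_sup (Finset.self_mem_range_succ n)
    _ = (range (n + 1)).sup (disjointed f) := (sup_range_disjointed f _).symm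
    _ ≤ seqSup (disjointed f) := Finset.sup_le fun i _ => le_seqSup _ i

theorem exists_sup_le_sup_range {E : Finset α} {d : ℕ → α} (hE : ↑E ⊆ Set.range d) :
    ∃ N, E.sup id ≤ (range N).sup d := by
  classical
  obtain ⟨I, -, rfl⟩ := Finset.subset_set_image_iff.1 (Set.image_univ (f := d) ▸ hE)
  obtain ⟨N, hN⟩ := I.exists_nat_subset_range
  exact ⟨N, by rw [Finset.sup_image]; exact Finset.sup_mono hN⟩

theorem TendstoTop.exists_le_of_ne_bot {b : ℕ → α} (hb : TendstoTop b) {a : α} (ha : a ≠ ⊥) :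
    ∃ x ≠ ⊥, x ≤ a ∧ ∃ n, ∀ k ≥ n, x ≤ b k := by
  obtain ⟨n, hn⟩ : ∃ n, a ⊓ seqInf (fun k => b (n + k)) ≠ ⊥ := by
    by_contra! h
    exact ha (eq_bot_of_forall_inf_eq_bot hb h)
  refine ⟨_, hn, inf_le_left, n, fun k hk => ?_⟩
  obtain ⟨j, rfl⟩ := Nat.exists_eq_add_of_le hk
  exact inf_le_right.trans (seqInf_le _ j)

theorem IsMaxAC.seqSup_eq_top {W : Set α} (hW : IsMaxAC W) {g : ℕ → α}
    (hg : W ⊆ Set.range g) : seqSup g = ⊤ := by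
  by_contra h
  obtain ⟨w, hw, hmeet⟩ := hW.2 _ (mt compl_eq_bot.1 h)
  obtain ⟨n, rfl⟩ := hg hw
  exact hmeet (disjoint_compl_right.mono_left (le_seqSup g n)).eq_bot

theorem isCMA_range_diff_bot {d : ℕ → α} (hd : Pairwise (Disjoint on d))
    (htop : seqSup d = ⊤) : IsCMA (Set.range d \ {⊥}) := by
  refine ⟨(Set.countable_range d).mono Set.sdiff_subset, ⟨fun h => h.2 rfl, ?_⟩,
    fun b hb => ?_⟩
  · rintro _ ⟨⟨i, rfl⟩, -⟩ _ ⟨⟨j, rfl⟩, -⟩ hij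
    exact (hd (ne_of_apply_ne d hij)).eq_bot
  · by_contra! h
    refine hb (eq_bot_of_forall_inf_eq_bot htop fun n => ?_)
    by_cases hn : d n = ⊥
    · rw [hn, inf_bot_eq]
    · rw [inf_comm]; exact h _ ⟨⟨n, rfl⟩, hn⟩

theorem map_finset_sup_eq_sum {β ι M : Type*} [DistribLattice β] [OrderBot β]
    [AddCommMonoid M] {μ : β → M} (h_bot : μ ⊥ = 0)
    (h_add : ∀ a b, a ⊓ b = ⊥ → μ (a ⊔ b) = μ a + μ b)
    {f : ι → β} (hf : Pairwise (Disjoint on f)) (s : Finset ι) :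
    μ (s.sup f) = ∑ i ∈ s, μ (f i) := by
  classical
  induction s using Finset.induction_on with
  | empty => simpa using h_bot
  | insert i s hi ih =>
    rw [Finset.sup_insert, Finset.sum_insert hi, h_add, ih]
    exact (Finset.disjoint_sup_right.2 fun j hj =>
      hf (ne_of_mem_of_not_mem hj hi).symm).eq_bot

namespace IsFinAddMeasure

variable {m : α → ℝ} (hm : IsFinAddMeasure m)
include hm

theorem nonneg (a : α) : 0 ≤ m a :=
  hm.map_bot ▸ hm.mono _ _ bot_le

theorem eq_bot_of_le_zero {a : α} (ha : m a ≤ 0) : a = ⊥ :=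
  not_not.1 fun h => (hm.pos a h).not_ge ha

theorem nontrivial : Nontrivial α :=
  nontrivial_of_ne ⊤ ⊥ fun h => by simpa [h, hm.map_bot] using hm.map_top

theorem compl (a : α) : m aᶜ = 1 - m a := by
  have := hm.add a aᶜ inf_compl_eq_bot
  rw [sup_compl_eq_top, hm.map_top] at this
  linarith

theorem sup_le_add (a b : α) : m (a ⊔ b) ≤ m a + m b := by
  rw [← sup_sdiff_self_right, hm.add _ _ (inf_sdiff_self_right)]
  exact add_le_add_right (hm.mono _ _ sdiff_le) _

theorem finset_sup_le_sum {ι : Type*} (s : Finset ι) (f : ι → α) :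
    m (s.sup f) ≤ ∑ i ∈ s, m (f i) := by
  classical
  induction s using Finset.induction_on with
  | empty => simpa using hm.map_bot.le
  | insert i s hi ih =>
    rw [Finset.sup_insert, Finset.sum_insert hi]
    exact (hm.sup_le_add _ _).trans (add_le_add le_rfl ih)

end IsFinAddMeasure

namespace IsMeasure

variable {m : α → ℝ} (hm : IsMeasure m)
include hm

theorem hasSum_disjointed (f : ℕ → α) :
    HasSum (fun n => m (disjointed f n)) (m (seqSup f)) :=
  seqSup_disjointed f ▸ hm.sigma_add _ fun _ _ h => (disjoint_disjointed f h).eq_bot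

theorem le_tsum {f : ℕ → α} (hf : Summable fun n => m (f n)) :
    m (seqSup f) ≤ ∑' n, m (f n) :=
  (hm.hasSum_disjointed f).tsum_eq ▸
    Summable.tsum_le_tsum (fun n => hm.mono _ _ (disjointed_le f n))
      (hm.hasSum_disjointed f).summable hf

theorem tendsto_sup_range (f : ℕ → α) :
    Tendsto (fun N => m ((range N).sup f)) atTop (𝓝 (m (seqSup f))) := by
  convert (hm.hasSum_disjointed f).tendsto_sum_nat using 2 with N
  rw [← sup_range_disjointed, map_finset_sup_eq_sum hm.map_bot hm.add (disjoint_disjointed f)]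

theorem tendstoTop_of_summable {b : ℕ → α} (hb : Summable fun n => m (b n)ᶜ) : TendstoTop b := by
  set t : ℕ → α := fun n => seqInf fun k => b (n + k)
  have htail : ∀ n, m (seqSup t)ᶜ ≤ ∑' k, m (b (k + n))ᶜ := fun n => calc
    m (seqSup t)ᶜ ≤ m (t n)ᶜ := hm.mono _ _ (compl_le_compl (le_seqSup t n))
    _ ≤ ∑' k, m (b (n + k))ᶜ := by
      rw [compl_seqInf]
      exact hm.le_tsum ((summable_nat_add_iff n).2 hb |>.congr fun k => by rw [add_comm])
    _ = ∑' k, m (b (k + n))ᶜ := by simp_rw [add_comm n]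
  have hzero : m (seqSup t)ᶜ ≤ 0 := ge_of_tendsto' (tendsto_sum_nat_add fun k => m (b k)ᶜ) htail
  exact compl_eq_bot.1 (hm.eq_bot_of_le_zero hzero)

theorem exists_finset_one_sub_lt {W : Set α} (hW : IsCMA W) {δ : ℝ} (hδ : 0 < δ) :
    ∃ E : Finset α, ↑E ⊆ W ∧ 1 - δ < m (E.sup id) := by
  classical
  have := hm.nontrivial
  obtain ⟨w, hw, -⟩ := hW.2.2 ⊤ top_ne_bot
  obtain ⟨g, rfl⟩ := hW.1.exists_eq_range ⟨w, hw⟩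
  have hlim := hm.tendsto_sup_range g
  rw [hW.2.seqSup_eq_top le_rfl, hm.map_top] at hlim
  obtain ⟨N, hN⟩ := (hlim.eventually_const_lt (sub_lt_self 1 hδ)).exists
  refine ⟨(range N).image g, by simp, ?_⟩
  rwa [Finset.sup_image, Function.id_comp]

theorem weaklyDistributive : WeaklyDistributive α := by
  intro W hW
  choose E hEW hE using fun n =>
    hm.exists_finset_one_sub_lt (hW n) (pow_pos (one_half_pos (α := ℝ)) n)
  refine ⟨E, hEW, hm.tendstoTop_of_summable (summable_geometric_two.of_nonneg_of_le
    (fun n => hm.nonneg _) fun n => ?_)⟩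
  rw [hm.compl]
  linarith [hE n]

end IsMeasure

noncomputable def coverMeasure (m : α → ℝ) (a : α) : ℝ≥0∞ :=
  ⨅ (c : ℕ → α) (_ : a ≤ seqSup c), ∑' n, ENNReal.ofReal (m (c n))

section coverMeasure

variable {m : α → ℝ}

theorem coverMeasure_le_tsum {a : α} {c : ℕ → α} (h : a ≤ seqSup c) :
    coverMeasure m a ≤ ∑' n, ENNReal.ofReal (m (c n)) :=
  iInf₂_le c h

theorem exists_cover_lt {a : α} {r : ℝ≥0∞} (h : coverMeasure m a < r) :
    ∃ c : ℕ → α, a ≤ seqSup c ∧ ∑' n, ENNReal.ofReal (m (c n)) < r := by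
  simpa only [coverMeasure, iInf_lt_iff, exists_prop] using h

theorem coverMeasure_mono {a b : α} (hab : a ≤ b) : coverMeasure m a ≤ coverMeasure m b :=
  le_iInf₂ fun _ hc => coverMeasure_le_tsum (hab.trans hc)

theorem coverMeasure_le_tsum_tsum {a : α} {C : ℕ → ℕ → α} (h : a ≤ seqSup fun n => seqSup (C n)) :
    coverMeasure m a ≤ ∑' n, ∑' j, ENNReal.ofReal (m (C n j)) := by
  let e : ℕ → α := fun i => C (Nat.unpair i).1 (Nat.unpair i).2
  have hcover : a ≤ seqSup e := h.trans <| seqSup_le _ _ fun n => seqSup_le _ _ fun j => by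
    simpa [e] using le_seqSup e (Nat.pair n j)
  calc coverMeasure m a ≤ ∑' i, ENNReal.ofReal (m (e i)) := coverMeasure_le_tsum hcover
    _ = ∑' p : ℕ × ℕ, ENNReal.ofReal (m (C p.1 p.2)) :=
      Nat.pairEquiv.symm.tsum_eq fun p => ENNReal.ofReal (m (C p.1 p.2))
    _ = ∑' n, ∑' j, ENNReal.ofReal (m (C n j)) :=
      ENNReal.tsum_prod (f := fun n j => ENNReal.ofReal (m (C n j)))

variable (hm : IsFinAddMeasure m)
include hm

theorem coverMeasure_le_ofReal (a : α) : coverMeasure m a ≤ ENNReal.ofReal (m a) := by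
  calc coverMeasure m a ≤ ∑' n, ENNReal.ofReal (m (if n = 0 then a else ⊥)) :=
        coverMeasure_le_tsum (by simpa using le_seqSup (fun n => if n = 0 then a else ⊥) 0)
    _ = ENNReal.ofReal (m a) := by
      rw [tsum_eq_single 0 fun n hn => by simp [hn, hm.map_bot]]
      simp

theorem coverMeasure_ne_top (a : α) : coverMeasure m a ≠ ⊤ :=
  ((coverMeasure_le_ofReal hm a).trans_lt ENNReal.ofReal_lt_top).ne

theorem coverMeasure_bot : coverMeasure m ⊥ = 0 :=
  nonpos_iff_eq_zero.1 (by simpa [hm.map_bot] using coverMeasure_le_ofReal hm ⊥)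

theorem coverMeasure_seqSup_le (f : ℕ → α) :
    coverMeasure m (seqSup f) ≤ ∑' n, coverMeasure m (f n) := by
  refine ENNReal.le_of_forall_pos_le_add fun ε hε _ => ?_
  obtain ⟨δ, hδ, hδε⟩ := ENNReal.exists_pos_sum_of_countable' (ENNReal.coe_ne_zero.2 hε.ne') ℕ
  choose C hfC hC using fun n =>
    exists_cover_lt (ENNReal.lt_add_right (coverMeasure_ne_top hm (f n)) (hδ n).ne')
  calc coverMeasure m (seqSup f) ≤ ∑' n, ∑' j, ENNReal.ofReal (m (C n j)) :=
        coverMeasure_le_tsum_tsum (seqSup_mono hfC)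
    _ ≤ ∑' n, (coverMeasure m (f n) + δ n) := ENNReal.tsum_le_tsum fun n => (hC n).le
    _ = ∑' n, coverMeasure m (f n) + ∑' n, δ n := ENNReal.tsum_add
    _ ≤ ∑' n, coverMeasure m (f n) + ε := add_le_add le_rfl hδε.le

theorem coverMeasure_add {a b : α} (hab : a ⊓ b = ⊥) :
    coverMeasure m (a ⊔ b) = coverMeasure m a + coverMeasure m b := by
  refine le_antisymm ?_ (le_iInf₂ fun e he => ?_)
  · let f : ℕ → α := fun | 0 => a | 1 => b | _ => ⊥
    have hf : seqSup f = a ⊔ b := le_antisymm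
      (seqSup_le _ _ fun | 0 => le_sup_left | 1 => le_sup_right | _ + 2 => bot_le)
      (sup_le (le_seqSup f 0) (le_seqSup f 1))
    calc coverMeasure m (a ⊔ b) ≤ ∑' n, coverMeasure m (f n) := hf ▸ coverMeasure_seqSup_le hm f
      _ = coverMeasure m a + coverMeasure m b := by
        rw [tsum_eq_sum (s := {0, 1}) fun n hn => ?_, Finset.sum_pair zero_ne_one]
        · rfl
        · match n, hn with
          | 0, h | 1, h => simp at h
          | _ + 2, _ => exact coverMeasure_bot hm
  · have hrestrict : ∀ x ≤ a ⊔ b, x ≤ seqSup fun n => x ⊓ e n := fun x hx => by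
      rw [← inf_seqSup, inf_eq_left.2 (hx.trans he)]
    calc coverMeasure m a + coverMeasure m b
        ≤ ∑' n, ENNReal.ofReal (m (a ⊓ e n)) + ∑' n, ENNReal.ofReal (m (b ⊓ e n)) :=
          add_le_add (coverMeasure_le_tsum (hrestrict a le_sup_left))
            (coverMeasure_le_tsum (hrestrict b le_sup_right))
      _ = ∑' n, ENNReal.ofReal (m ((a ⊓ e n) ⊔ (b ⊓ e n))) := by
        rw [← ENNReal.tsum_add]
        congr 1 with n
        rw [hm.add _ _ ((disjoint_iff.2 hab).mono inf_le_left inf_le_left).eq_bot,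
          ENNReal.ofReal_add (hm.nonneg _) (hm.nonneg _)]
      _ ≤ ∑' n, ENNReal.ofReal (m (e n)) :=
        ENNReal.tsum_le_tsum fun n =>
          ENNReal.ofReal_le_ofReal (hm.mono _ _ (sup_le inf_le_right inf_le_right))

theorem tsum_coverMeasure {f : ℕ → α} (hf : ∀ i j, i ≠ j → f i ⊓ f j = ⊥) :
    ∑' n, coverMeasure m (f n) = coverMeasure m (seqSup f) := by
  refine le_antisymm (ENNReal.tsum_le_of_sum_range_le fun N => ?_) (coverMeasure_seqSup_le hm f)
  rw [← map_finset_sup_eq_sum (coverMeasure_bot hm) (fun _ _ => coverMeasure_add hm)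
    (fun i j h => disjoint_iff.2 (hf i j h))]
  exact coverMeasure_mono (Finset.sup_le fun i _ => le_seqSup f i)

end coverMeasure

theorem ofReal_le_tsum_of_le_sup {m : α → ℝ} (hm : IsFinAddMeasure m) {a x : α} (hxa : x ≤ a)
    {c : ℕ → α} {E : Finset α} (hE : ↑E ⊆ Set.range (disjointed fun j => aᶜ ⊔ c j))
    (hxE : x ≤ E.sup id) : ENNReal.ofReal (m x) ≤ ∑' j, ENNReal.ofReal (m (c j)) := by
  obtain ⟨N, hN⟩ := exists_sup_le_sup_range hE
  have hxc : x ≤ (range N).sup c := by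
    refine Disjoint.left_le_of_le_sup_left ?_ (disjoint_compl_right.mono_left hxa)
    calc x ≤ (range N).sup (disjointed fun j => aᶜ ⊔ c j) := hxE.trans hN
      _ = (range N).sup fun j => aᶜ ⊔ c j := sup_range_disjointed _ _
      _ ≤ aᶜ ⊔ (range N).sup c := Finset.sup_le fun j hj => sup_le_sup_left (Finset.le_sup hj) _
  calc ENNReal.ofReal (m x) ≤ ENNReal.ofReal (∑ j ∈ range N, m (c j)) :=
        ENNReal.ofReal_le_ofReal ((hm.mono _ _ hxc).trans (hm.finset_sup_le_sum _ _))
    _ = ∑ j ∈ range N, ENNReal.ofReal (m (c j)) :=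
        ENNReal.ofReal_sum_of_nonneg fun j _ => hm.nonneg _
    _ ≤ ∑' j, ENNReal.ofReal (m (c j)) := ENNReal.sum_le_tsum _

theorem coverMeasure_ne_zero {m : α → ℝ} (hm : IsFinAddMeasure m) (hwd : WeaklyDistributive α)
    {a : α} (ha : a ≠ ⊥) : coverMeasure m a ≠ 0 := by
  intro h0
  choose c hac hc using fun k : ℕ =>
    exists_cover_lt (m := m) (h0 ▸ ENNReal.pow_pos (by norm_num : (0 : ℝ≥0∞) < 2⁻¹) k)
  let g : ℕ → ℕ → α := fun k j => aᶜ ⊔ c k j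
  have hg : ∀ k, seqSup (g k) = ⊤ := fun k => top_le_iff.1 <| calc
    ⊤ = aᶜ ⊔ a := compl_sup_eq_top.symm
    _ ≤ seqSup (g k) := sup_le (le_sup_left.trans (le_seqSup (g k) 0))
      ((hac k).trans (seqSup_mono fun j => le_sup_right))
  obtain ⟨E, hEW, hE⟩ := hwd (fun k => Set.range (disjointed (g k)) \ {⊥}) fun k =>
    isCMA_range_diff_bot (disjoint_disjointed _) ((seqSup_disjointed _).trans (hg k))
  obtain ⟨x, hx, hxa, n, hxE⟩ := hE.exists_le_of_ne_bot ha
  have hsmall : ∀ k ≥ n, ENNReal.ofReal (m x) ≤ 2⁻¹ ^ k := fun k hk =>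
    (ofReal_le_tsum_of_le_sup hm hxa ((hEW k).trans Set.sdiff_subset) (hxE k hk)).trans (hc k).le
  have hzero : ENNReal.ofReal (m x) ≤ 0 :=
    ge_of_tendsto (ENNReal.tendsto_pow_atTop_nhds_zero_of_lt_one (by norm_num))
      (eventually_atTop.2 ⟨n, hsmall⟩)
  exact hx (hm.eq_bot_of_le_zero (ENNReal.ofReal_eq_zero.1 (nonpos_iff_eq_zero.1 hzero)))

theorem exists_isMeasure_of_ennreal [Nontrivial α] {ν : α → ℝ≥0∞} (h_bot : ν ⊥ = 0)
    (h_ne_top : ∀ a, ν a ≠ ⊤) (h_ne_zero : ∀ a, a ≠ ⊥ → ν a ≠ 0) (h_mono : Monotone ν)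
    (h_add : ∀ a b, a ⊓ b = ⊥ → ν (a ⊔ b) = ν a + ν b)
    (h_sigma : ∀ f : ℕ → α, (∀ i j, i ≠ j → f i ⊓ f j = ⊥) → ∑' n, ν (f n) = ν (seqSup f)) :
    ∃ m : α → ℝ, IsMeasure m := by
  have hpos : ∀ a, a ≠ ⊥ → 0 < (ν a).toReal := fun a ha =>
    ENNReal.toReal_pos (h_ne_zero a ha) (h_ne_top a)
  set T := (ν ⊤).toReal
  have hT : 0 < T := hpos ⊤ top_ne_bot
  refine ⟨fun a => (ν a).toReal / T, ⟨?_, fun a ha => div_pos (hpos a ha) hT, div_self hT.ne',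
    fun a b hab => ?_, fun a b hab => ?_⟩, fun f hf => ?_⟩
  · simp [h_bot]
  · exact div_le_div_of_nonneg_right
      ((ENNReal.toReal_le_toReal (h_ne_top a) (h_ne_top b)).2 (h_mono hab)) hT.le
  · rw [h_add a b hab, ENNReal.toReal_add (h_ne_top a) (h_ne_top b), add_div]
  · have h := ENNReal.hasSum_toReal ((h_sigma f hf).symm ▸ h_ne_top _)
    rw [← ENNReal.tsum_toReal_eq fun n => h_ne_top (f n), h_sigma f hf] at h
    exact h.div_const T

end BooleanSigmaAlgebra

open BooleanSigmaAlgebra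

/-- **Pinsker–Kelley.** A Boolean σ-algebra `B` carries a measure if and only
if it is weakly distributive and carries a strictly positive finitely additive
measure. -/
theorem carries_measure_iff_weaklyDistributive_and_finAddMeasure
    (α : Type u) [BooleanSigmaAlgebra α] :
    (∃ m : α → ℝ, IsMeasure m) ↔
      WeaklyDistributive α ∧ ∃ m : α → ℝ, IsFinAddMeasure m := by
  constructor
  · rintro ⟨m, hm⟩
    exact ⟨hm.weaklyDistributive, m, hm.toIsFinAddMeasure⟩
  · rintro ⟨hwd, m, hm⟩
    have := hm.nontrivial
    exact exists_isMeasure_of_ennreal (coverMeasure_bot hm) (coverMeasure_ne_top hm)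
      (fun _ => coverMeasure_ne_zero hm hwd) (fun _ _ => coverMeasure_mono)
      (fun _ _ => coverMeasure_add hm) (fun _ => tsum_coverMeasure hm)
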